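/- For every integer n ≥ 2, Σ_{i=2}^{n} i² · (i-1) · (2n-i-2)! / (2(n-i))!! = 2·(2n-1)!! − (2n-2)!!. -/

import Mathlib

/-- Plane binary trees with ℕ-labeled leaves. -/
inductive BTree : Type
  | leaf : ℕ → BTree
  | node : BTree → BTree → BTree

namespace BTree

/-- Multiset of leaf labels. -/
def leaves : BTree → Multiset ℕ
  | leaf i => {i}
  | node l r => leaves l + leaves r

/-- Depth of the leaf labeled `i` (junk if `i` is not a leaf label). -/
def dep : BTree → ℕ → ℕ
  | leaf _, _ => 0
  | node l r, i => if i ∈ leaves l then dep l i + 1 else dep r i + 1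

/-- Path length (number of edges) between the leaves labeled `i` and `j`. -/
def dist : BTree → ℕ → ℕ → ℕ
  | leaf _, _, _ => 0
  | node l r, i, j =>
    if i ∈ leaves l ∧ j ∈ leaves l then dist l i j
    else if i ∈ leaves r ∧ j ∈ leaves r then dist r i j
    else (if i ∈ leaves l then dep l i + 1 else dep r i + 1)
       + (if j ∈ leaves l then dep l j + 1 else dep r j + 1)

/-- Isomorphism of leaf-labeled binary trees: generated by swapping the two
children of any node, preserving leaf labels. -/
inductive Iso : BTree → BTree → Prop
  | leaf (i : ℕ) : Iso (leaf i) (leaf i)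
  | node {l r l' r'} : Iso l l' → Iso r r' → Iso (node l r) (node l' r')
  | swap {l r l' r'} : Iso l r' → Iso r l' → Iso (node l r) (node l' r')

end BTree

/-- A valid fully resolved rooted phylogenetic tree on the leaf set {1,…,n}:
the multiset of leaf labels is exactly {1,…,n} (each label occurring once). -/
def BTree.valid (n : ℕ) (t : BTree) : Prop := t.leaves = (Finset.Icc 1 n).val

/-- The type of fully resolved rooted phylogenetic trees on {1,…,n}, up to
label-preserving isomorphism. -/
def PhyloTree (n : ℕ) : Type :=
  Quot (fun a b : {t : BTree // t.valid n} => BTree.Iso a.1 b.1)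

/-- The path length between leaves `i` and `j` of a phylogenetic tree,
computed on a representative. -/
noncomputable def pdist {n : ℕ} (T : PhyloTree n) (i j : ℕ) : ℕ :=
  BTree.dist T.out.1 i j

/-- Double factorial: `df n = n‼`. -/
def df : ℕ → ℕ
  | 0 => 1
  | 1 => 1
  | n + 2 => (n + 2) * df n

/-- Rising factorial (Pochhammer symbol) `(a)_k = a(a+1)⋯(a+k-1)`. -/
def rf (a : ℝ) : ℕ → ℝ
  | 0 => 1
  | k + 1 => rf a k * (a + k)

/-! Put `m = n - 2` and `j = n - i`; the summand becomes `(m+2-j)²(m+1-j) t j` with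
`t j = (m+j)!/(2j)‼`. As `t (j+1) / t j = (m+j+1)/(2j+2)`, this equals
`G (j+1) - G j - (2m+2) t j` for `G j = 2j((m+1-j)² + 4m + 6) t j` (Gosper's algorithm),
so the sum telescopes to `G (m+1) - (2m+2) ∑ t j`. Finally
`∑_{j ≤ m} t j = m! ∑_{j ≤ m} C(m+j, j)/2^j = m! 2^m = (2m)‼`; the binomial sum doubles from
`m` to `m+1` by Pascal's rule and `C(2m+2, m+1) = 2 C(2m+1, m+1)`. -/

open Finset Nat

lemma df_eq_doubleFactorial : ∀ n, df n = n‼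
  | 0 => rfl
  | 1 => rfl
  | n + 2 => by rw [df, df_eq_doubleFactorial n, doubleFactorial_add_two]

lemma choose_two_mul_add_two_succ (m : ℕ) :
    (2 * m + 2).choose (m + 1) = 2 * (2 * m + 1).choose (m + 1) := by
  rw [choose_succ_succ', ← choose_symm_half]; ring

theorem sum_range_choose_add_div_two_pow (m : ℕ) :
    ∑ j ∈ range (m + 1), ((m + j).choose j : ℝ) / 2 ^ j = 2 ^ m := by
  induction m with
  | zero => simp
  | succ m ih =>
    set S := ∑ j ∈ range (m + 2), ((m + 1 + j).choose j : ℝ) / 2 ^ j with hS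
    have h_shift : ∑ j ∈ range (m + 1), ((m + (j + 1)).choose (j + 1) : ℝ) / 2 ^ (j + 1)
        = 2 ^ m + ((2 * m + 1).choose (m + 1) : ℝ) / 2 ^ (m + 1) - 1 := by
      have h := sum_range_succ' (fun j => ((m + j).choose j : ℝ) / 2 ^ j) (m + 1)
      rw [sum_range_succ, ih, show m + (m + 1) = 2 * m + 1 by ring] at h
      simp only [add_zero, choose_zero_right, cast_one, pow_zero, div_one] at h
      linarith
    have h_last : S = 2 * ∑ j ∈ range (m + 1), ((m + 1 + j).choose j : ℝ) / 2 ^ (j + 1)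
        + ((2 * m + 2).choose (m + 1) : ℝ) / 2 ^ (m + 1) := by
      rw [hS, sum_range_succ, mul_sum, show m + 1 + (m + 1) = 2 * m + 2 by ring]
      congr 1
      refine sum_congr rfl fun j _ => ?_
      rw [pow_succ]; field_simp
    have h_first : S = 1 + ∑ j ∈ range (m + 1), ((m + (j + 1)).choose (j + 1) : ℝ) / 2 ^ (j + 1)
        + ∑ j ∈ range (m + 1), ((m + 1 + j).choose j : ℝ) / 2 ^ (j + 1) := by
      rw [hS, sum_range_succ']
      simp only [add_zero, choose_zero_right, cast_one, pow_zero, div_one]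
      rw [add_comm _ (1 : ℝ), add_assoc, ← sum_add_distrib]
      congr 1
      refine sum_congr rfl fun j _ => ?_
      rw [show m + 1 + (j + 1) = m + (j + 1) + 1 by ring, choose_succ_succ',
        show m + (j + 1) = m + 1 + j by ring]
      push_cast; ring
    rw [choose_two_mul_add_two_succ] at h_last
    push_cast at h_last
    linear_combination 2 * h_first - h_last + 2 * h_shift

theorem sum_range_factorial_add_div_doubleFactorial (m : ℕ) :
    ∑ j ∈ range (m + 1), ((m + j)! : ℝ) / (2 * j)‼ = (2 * m)‼ := by
  have h_term : ∀ j, ((m + j)! : ℝ) / (2 * j)‼ = m ! * (((m + j).choose j : ℝ) / 2 ^ j) := by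
    intro j
    rw [← add_choose_mul_factorial_mul_factorial, doubleFactorial_two_mul]
    push_cast
    field_simp
  simp_rw [h_term, ← mul_sum, sum_range_choose_add_div_two_pow, doubleFactorial_two_mul]
  push_cast
  ring

lemma factorial_add_div_doubleFactorial_succ (m j : ℕ) :
    ((m + (j + 1))! : ℝ) / (2 * (j + 1))‼
      = (m + j + 1) / (2 * j + 2) * ((m + j)! / (2 * j)‼) := by
  rw [← add_assoc, factorial_succ, mul_add_one, doubleFactorial_add_two]
  push_cast
  field_simp

theorem sum_range_cubic_mul_factorial_add_div_doubleFactorial (m : ℕ) :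
    ∑ j ∈ range (m + 1), ((m : ℝ) + 2 - j) ^ 2 * ((m : ℝ) + 1 - j) * ((m + j)! : ℝ) / (2 * j)‼
      = 2 * ((2 * m + 3)‼ : ℝ) - (2 * m + 2)‼ := by
  set t : ℕ → ℝ := fun j => ((m + j)! : ℝ) / (2 * j)‼ with ht
  set G : ℕ → ℝ := fun j => 2 * j * (((m : ℝ) + 1 - j) ^ 2 + 4 * m + 6) * t j with hG
  have h_step : ∀ j, ((m : ℝ) + 2 - j) ^ 2 * ((m : ℝ) + 1 - j) * ((m + j)! : ℝ) / (2 * j)‼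
      = G (j + 1) - G j - (2 * m + 2) * t j := by
    intro j
    simp only [hG, ht, factorial_add_div_doubleFactorial_succ]
    push_cast
    field_simp
    ring
  rw [sum_congr rfl fun j _ => h_step j, sum_sub_distrib, sum_range_sub, ← mul_sum,
    show ∑ j ∈ range (m + 1), t j = (2 * m)‼ from sum_range_factorial_add_div_doubleFactorial m]
  simp only [hG, ht]
  rw [show m + (m + 1) = 2 * m + 1 by ring, factorial_eq_mul_doubleFactorial,
    show 2 * (m + 1) = 2 * m + 2 by ring, doubleFactorial_add_two,
    show 2 * m + 3 = 2 * m + 1 + 2 by ring, doubleFactorial_add_two]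
  push_cast
  field_simp
  ring

/-- Σ_{i=2}^{n} i²(i-1)(2n-i-2)!/(2(n-i))‼ = 2·(2n-1)‼ − (2n-2)‼. -/
theorem stmt8 (n : ℕ) (hn : 2 ≤ n) :
    ∑ i ∈ Finset.Icc 2 n,
        (i : ℝ) ^ 2 * ((i : ℝ) - 1) * (Nat.factorial (2 * n - i - 2) : ℝ) /
          (df (2 * (n - i)) : ℝ)
      = 2 * (df (2 * n - 1) : ℝ) - (df (2 * n - 2) : ℝ) := by
  obtain ⟨m, rfl⟩ : ∃ m, n = m + 2 := ⟨n - 2, by omega⟩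
  simp only [df_eq_doubleFactorial]
  rw [show 2 * (m + 2) - 1 = 2 * m + 3 by omega, show 2 * (m + 2) - 2 = 2 * m + 2 by omega,
    ← sum_range_cubic_mul_factorial_add_div_doubleFactorial, ← sum_range_reflect,
    ← Ico_add_one_right_eq_Icc, sum_Ico_eq_sum_range, show m + 2 + 1 - 2 = m + 1 by omega]
  refine sum_congr rfl fun k hk => ?_
  have hk : k ≤ m := Nat.lt_succ_iff.mp (mem_range.mp hk)
  rw [show 2 * (m + 2) - (2 + k) - 2 = m + (m + 1 - 1 - k) by omega,
    show m + 2 - (2 + k) = m + 1 - 1 - k by omega]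
  push_cast [Nat.cast_sub hk]
  ring
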